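/- Let m ≥ 1 and let Γ and A be symmetric positive definite real m×m matrices. Let κ₁² denote the smallest eigenvalue of Γ, let K be the positive definite symmetric square root of Γ, let b₁ > 0 denote the smallest eigenvalue of K⁻¹ A K⁻¹, set α = √(b₁ κ₁² / 2) and ε₁ = α/b₁. Then for every ε ∈ (0, ε₁) and every s ∈ ℝ with s ≠ 0, the matrix D(ε, s) = −ε s² I + i s Γ + ε A is invertible and ‖D(ε, s)⁻¹‖ ≤ (1/κ₁²) · min{ 2/(b₁ ε), max{ 1/α, 1/|s| } }. -/

import Mathlib

/-!
Write `Γ = K²`. The spectral hypotheses say `κ₁² ≤ Γ` and `b₁ ≤ K⁻¹ A K⁻¹` in the Loewner order,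
and conjugating the latter by `K` gives `b₁ Γ ≤ A`. For a vector `y`, `⟪y, D y⟫` has imaginary part
`s ⟪y, Γ y⟫`, of absolute value at least `κ₁² |s| ‖y‖²`, and real part
`ε (⟪y, A y⟫ - s² ‖y‖²) ≥ ε (b₁ κ₁² - s²) ‖y‖²`. When `|s| ≤ b₁ ε / 2 < α / 2` we have
`s² ≤ b₁ κ₁² / 2`, so the real part is at least `κ₁² (b₁ ε / 2) ‖y‖²`. By Cauchy–Schwarz,
`‖D y‖ ≥ κ₁² max(|s|, b₁ ε / 2) ‖y‖`, so `D` is invertible with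
`‖D⁻¹‖ ≤ 1 / (κ₁² max(|s|, b₁ ε / 2))`, which is at most the claimed bound.
-/

noncomputable section

/-- Operator norm of a complex `m × m` matrix induced by the Euclidean norm on `ℂ^m`. -/
def l2OpNorm (m : ℕ) (D : Matrix (Fin m) (Fin m) ℂ) : ℝ :=
  ‖LinearMap.toContinuousLinearMap (Matrix.toEuclideanLin D)‖

/-- The propagator matrix `D(ε,s) = -ε s² 1 + i s Γ + ε A`. -/
def propagator (m : ℕ) (Γ A : Matrix (Fin m) (Fin m) ℝ) (ε s : ℝ) :
    Matrix (Fin m) (Fin m) ℂ :=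
  (-(ε * s ^ 2) : ℂ) • (1 : Matrix (Fin m) (Fin m) ℂ)
    + (Complex.I * s) • Γ.map (fun a => (a : ℂ))
    + (ε : ℂ) • A.map (fun a => (a : ℂ))

open Matrix
open scoped InnerProductSpace MatrixOrder Matrix.Norms.L2Operator

section InnerProductSpace

variable {E : Type*} [NormedAddCommGroup E] [InnerProductSpace ℂ E]

lemma mul_norm_le_norm_of_mul_norm_sq_le_norm_inner {x v : E} {c : ℝ}
    (h : c * ‖x‖ ^ 2 ≤ ‖⟪x, v⟫_ℂ‖) : c * ‖x‖ ≤ ‖v‖ := by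
  rcases (norm_nonneg x).eq_or_lt with hx | hx
  · rw [← hx, mul_zero]
    exact norm_nonneg v
  · refine le_of_mul_le_mul_right ?_ hx
    calc c * ‖x‖ * ‖x‖ = c * ‖x‖ ^ 2 := by ring
      _ ≤ ‖⟪x, v⟫_ℂ‖ := h
      _ ≤ ‖x‖ * ‖v‖ := norm_inner_le_norm x v
      _ = ‖v‖ * ‖x‖ := mul_comm _ _

def propagatorOp (G A : E →ₗ[ℂ] E) (ε s : ℝ) : E →ₗ[ℂ] E :=
  (-(ε * s ^ 2) : ℂ) • 1 + (Complex.I * s) • G + (ε : ℂ) • A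

variable {G A : E →ₗ[ℂ] E}

lemma inner_propagatorOp (hG : G.IsSymmetric) (hA : A.IsSymmetric) (ε s : ℝ) (y : E) :
    ⟪y, propagatorOp G A ε s y⟫_ℂ =
      ⟨ε * ((⟪y, A y⟫_ℂ).re - s ^ 2 * ‖y‖ ^ 2), s * (⟪y, G y⟫_ℂ).re⟩ := by
  simp only [propagatorOp, LinearMap.add_apply, LinearMap.smul_apply, Module.End.one_apply,
    inner_add_right, inner_smul_right, inner_self_eq_norm_sq_to_K]
  rw [← hG.coe_re_inner_self_apply y, ← hA.coe_re_inner_self_apply y]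
  apply Complex.ext <;> simp [← Complex.ofReal_pow, mul_sub, mul_assoc, neg_add_eq_sub]

variable {κ b : ℝ} (hG : G.IsSymmetric) (hA : A.IsSymmetric)
  (hGκ : ∀ y, κ * ‖y‖ ^ 2 ≤ (⟪y, G y⟫_ℂ).re) (hAG : ∀ y, b * (⟪y, G y⟫_ℂ).re ≤ (⟪y, A y⟫_ℂ).re)
include hG hA hGκ

lemma mul_abs_mul_norm_sq_le_norm_inner_propagatorOp (ε s : ℝ) (y : E) :
    κ * |s| * ‖y‖ ^ 2 ≤ ‖⟪y, propagatorOp G A ε s y⟫_ℂ‖ := by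
  rw [inner_propagatorOp hG hA]
  refine le_trans ?_ (Complex.abs_im_le_norm _)
  calc κ * |s| * ‖y‖ ^ 2 = |s| * (κ * ‖y‖ ^ 2) := by ring
    _ ≤ |s| * |(⟪y, G y⟫_ℂ).re| :=
      mul_le_mul_of_nonneg_left ((hGκ y).trans (le_abs_self _)) (abs_nonneg s)
    _ = _ := (abs_mul _ _).symm

include hAG

lemma mul_mul_norm_sq_le_norm_inner_propagatorOp {ε s : ℝ} (hb : 0 ≤ b) (hε : 0 ≤ ε)
    (hs : s ^ 2 ≤ b * κ / 2) (y : E) :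
    κ * (b * ε / 2) * ‖y‖ ^ 2 ≤ ‖⟪y, propagatorOp G A ε s y⟫_ℂ‖ := by
  rw [inner_propagatorOp hG hA]
  refine le_trans ?_ (Complex.re_le_norm _)
  have hbG := mul_le_mul_of_nonneg_left (hGκ y) hb
  have hs' := mul_le_mul_of_nonneg_right hs (sq_nonneg ‖y‖)
  nlinarith [hAG y]

lemma mul_max_mul_norm_sq_le_norm_inner_propagatorOp {ε s : ℝ} (hb : 0 ≤ b) (hε : 0 ≤ ε)
    (hεb : (b * ε / 2) ^ 2 ≤ b * κ / 2) (y : E) :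
    κ * max |s| (b * ε / 2) * ‖y‖ ^ 2 ≤ ‖⟪y, propagatorOp G A ε s y⟫_ℂ‖ := by
  rcases le_total (b * ε / 2) |s| with hs | hs
  · rw [max_eq_left hs]
    exact mul_abs_mul_norm_sq_le_norm_inner_propagatorOp hG hA hGκ ε s y
  · rw [max_eq_right hs]
    refine mul_mul_norm_sq_le_norm_inner_propagatorOp hG hA hGκ hAG hb hε ?_ y
    exact (sq_le_sq' (neg_le_of_abs_le hs) (le_of_abs_le hs)).trans hεb

end InnerProductSpace

namespace Matrix

variable {n : Type*} [Fintype n] [DecidableEq n] {𝕜 : Type*} [RCLike 𝕜]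

lemma smul_one_le_of_le_spectrum {X : Matrix n n 𝕜} (hX : X.IsHermitian) {c : ℝ}
    (h : ∀ μ ∈ spectrum ℝ X, c ≤ μ) : c • 1 ≤ X := by
  simpa [Algebra.algebraMap_eq_smul_one] using
    (algebraMap_le_iff_le_spectrum hX.isSelfAdjoint).2 h

lemma smul_mul_self_le_of_le_spectrum {K X : Matrix n n 𝕜} (hK : K.IsHermitian) (hKu : IsUnit K)
    (hX : X.IsHermitian) {b : ℝ} (h : ∀ μ ∈ spectrum ℝ (K⁻¹ * X * K⁻¹), b ≤ μ) :
    b • (K * K) ≤ X := by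
  have hKX : (K⁻¹ * X * K⁻¹).IsHermitian := by
    simpa only [hK.inv.eq] using isHermitian_mul_mul_conjTranspose K⁻¹ hX
  have hK1 : K * K⁻¹ = 1 := mul_nonsing_inv K ((isUnit_iff_isUnit_det K).1 hKu)
  have hK2 : K⁻¹ * K = 1 := nonsing_inv_mul K ((isUnit_iff_isUnit_det K).1 hKu)
  simpa [← mul_assoc, hK1, mul_assoc _ K⁻¹ K, hK2] using
    hK.isSelfAdjoint.conjugate_le_conjugate (smul_one_le_of_le_spectrum hKX h)

lemma re_inner_toEuclideanLin_smul (b : ℝ) (X : Matrix n n 𝕜) (x : EuclideanSpace 𝕜 n) :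
    RCLike.re ⟪x, toEuclideanLin (b • X) x⟫_𝕜 = b * RCLike.re ⟪x, toEuclideanLin X x⟫_𝕜 := by
  rw [← algebraMap_smul 𝕜 b X, map_smul, LinearMap.smul_apply, inner_smul_right,
    RCLike.algebraMap_eq_ofReal, RCLike.re_ofReal_mul]

lemma re_inner_toEuclideanLin_le_of_le {X Y : Matrix n n 𝕜} (h : X ≤ Y)
    (x : EuclideanSpace 𝕜 n) :
    RCLike.re ⟪x, toEuclideanLin X x⟫_𝕜 ≤ RCLike.re ⟪x, toEuclideanLin Y x⟫_𝕜 := by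
  have := (isPositive_toEuclideanLin_iff.2 (le_iff.1 h)).re_inner_nonneg_right x
  rwa [map_sub, LinearMap.sub_apply, inner_sub_right, map_sub, sub_nonneg] at this

lemma isUnit_of_mul_norm_le {M : Matrix n n 𝕜} {c : ℝ} (hc : 0 < c)
    (h : ∀ x, c * ‖x‖ ≤ ‖toEuclideanLin M x‖) : IsUnit M := by
  have hinj : Function.Injective (toEuclideanLin M) := by
    refine (injective_iff_map_eq_zero _).2 fun x hx => norm_le_zero_iff.1 ?_
    have := h x
    rw [hx, norm_zero] at this
    exact nonpos_of_mul_nonpos_right this hc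
  exact mulVec_injective_iff_isUnit.1 <|
    (WithLp.ofLp_injective 2).comp (hinj.comp (WithLp.toLp_injective 2))

lemma l2_opNorm_inv_le_of_mul_norm_le {M : Matrix n n 𝕜} {c : ℝ} (hc : 0 < c)
    (h : ∀ x, c * ‖x‖ ≤ ‖toEuclideanLin M x‖) : ‖M⁻¹‖ ≤ c⁻¹ := by
  have hM : M * M⁻¹ = 1 :=
    mul_nonsing_inv M ((isUnit_iff_isUnit_det M).1 (isUnit_of_mul_norm_le hc h))
  refine ContinuousLinearMap.opNorm_le_bound _ (inv_nonneg.2 hc.le) fun y => ?_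
  have hy : toEuclideanCLM (𝕜 := 𝕜) (M * M⁻¹) y = y := by rw [hM, map_one]; rfl
  rw [map_mul] at hy
  rw [inv_mul_eq_div, le_div_iff₀' hc]
  calc c * ‖toEuclideanCLM (𝕜 := 𝕜) M⁻¹ y‖
      ≤ ‖toEuclideanLin M (toEuclideanCLM (𝕜 := 𝕜) M⁻¹ y)‖ := h _
    _ = ‖y‖ := congrArg norm hy

lemma map_ofReal_le_map_ofReal {X Y : Matrix n n ℝ} (h : X ≤ Y) :
    X.map ((↑) : ℝ → ℂ) ≤ Y.map (↑) :=
  NonUnitalStarRingHom.map_le_map_of_map_star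
    { (Complex.ofRealHom.mapMatrix : Matrix n n ℝ →+* Matrix n n ℂ) with
      map_star' := fun _ => conjTranspose_map _ fun a => (Complex.conj_ofReal a).symm } h

lemma mul_re_inner_le_of_smul_le {X Y : Matrix n n ℝ} {b : ℝ} (h : b • X ≤ Y)
    (y : EuclideanSpace ℂ n) :
    b * (⟪y, toEuclideanLin (X.map (↑)) y⟫_ℂ).re ≤ (⟪y, toEuclideanLin (Y.map (↑)) y⟫_ℂ).re := by
  have := re_inner_toEuclideanLin_le_of_le (map_ofReal_le_map_ofReal h) y
  rwa [Matrix.map_smul _ b fun a => by simp, re_inner_toEuclideanLin_smul] at this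

lemma mul_norm_sq_le_re_inner_of_smul_one_le {X : Matrix n n ℝ} {c : ℝ} (h : c • 1 ≤ X)
    (y : EuclideanSpace ℂ n) : c * ‖y‖ ^ 2 ≤ (⟪y, toEuclideanLin (X.map (↑)) y⟫_ℂ).re := by
  simpa [← Complex.ofReal_pow] using mul_re_inner_le_of_smul_le h y

lemma isSymmetric_toEuclideanLin_map_ofReal {X : Matrix n n ℝ} (hX : X.IsHermitian) :
    (toEuclideanLin (X.map ((↑) : ℝ → ℂ))).IsSymmetric :=
  isSymmetric_toEuclideanLin_iff.2 (hX.map _ fun _ => by simp)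
end Matrix

lemma toEuclideanLin_propagator (m : ℕ) (Γ A : Matrix (Fin m) (Fin m) ℝ) (ε s : ℝ) :
    toEuclideanLin (propagator m Γ A ε s) =
      propagatorOp (toEuclideanLin (Γ.map (↑))) (toEuclideanLin (A.map (↑))) ε s := by
  simp only [propagator, propagatorOp, map_add, map_smul, toLpLin_one]
  rfl

theorem propagator_inverse_bound_full_general
    (m : ℕ)
    (Γ A : Matrix (Fin m) (Fin m) ℝ)
    (hΓpos : Γ.PosDef) (hApos : A.PosDef)
    (κ₁ : ℝ) (hκ : IsLeast (spectrum ℝ Γ) (κ₁ ^ 2))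
    (K : Matrix (Fin m) (Fin m) ℝ) (hKpos : K.PosDef)
    (hKsq : K * K = Γ)
    (b₁ : ℝ) (hb₁pos : 0 < b₁) (hb₁ : IsLeast (spectrum ℝ (K⁻¹ * A * K⁻¹)) b₁)
    (α : ℝ) (hα : α = Real.sqrt (b₁ * κ₁ ^ 2 / 2))
    (ε : ℝ) (hε : 0 < ε) (hε₁ : ε < α / b₁)
    (s : ℝ) (hs : s ≠ 0) :
    IsUnit (propagator m Γ A ε s) ∧
      l2OpNorm m (propagator m Γ A ε s)⁻¹
        ≤ (1 / κ₁ ^ 2) * min (2 / (b₁ * ε)) (max (1 / α) (1 / |s|)) := by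
  have hκpos : 0 < κ₁ ^ 2 := hΓpos.isStrictlyPositive.spectrum_pos hκ.1
  have hΓκ : κ₁ ^ 2 • 1 ≤ Γ := smul_one_le_of_le_spectrum hΓpos.isHermitian hκ.2
  have hAΓ : b₁ • Γ ≤ A := hKsq ▸ smul_mul_self_le_of_le_spectrum hKpos.isHermitian
    hKpos.isUnit hApos.isHermitian hb₁.2
  have hεb : (b₁ * ε / 2) ^ 2 ≤ b₁ * κ₁ ^ 2 / 2 := by
    have hα2 : α ^ 2 = b₁ * κ₁ ^ 2 / 2 := by rw [hα, Real.sq_sqrt (by positivity)]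
    have : b₁ * ε < α := by rwa [lt_div_iff₀ hb₁pos, mul_comm] at hε₁
    rw [← hα2]
    exact pow_le_pow_left₀ (by positivity) (by linarith [mul_pos hb₁pos hε]) 2
  set c := κ₁ ^ 2 * max |s| (b₁ * ε / 2)
  have hc : 0 < c := mul_pos hκpos (lt_max_of_lt_right (by positivity))
  have hlower : ∀ y, c * ‖y‖ ≤ ‖toEuclideanLin (propagator m Γ A ε s) y‖ := fun y =>
    mul_norm_le_norm_of_mul_norm_sq_le_norm_inner <| toEuclideanLin_propagator m Γ A ε s ▸
      mul_max_mul_norm_sq_le_norm_inner_propagatorOp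
        (isSymmetric_toEuclideanLin_map_ofReal hΓpos.isHermitian)
        (isSymmetric_toEuclideanLin_map_ofReal hApos.isHermitian)
        (mul_norm_sq_le_re_inner_of_smul_one_le hΓκ)
        (mul_re_inner_le_of_smul_le hAΓ) hb₁pos.le hε.le hεb y
  refine ⟨isUnit_of_mul_norm_le hc hlower, (l2_opNorm_inv_le_of_mul_norm_le hc hlower).trans ?_⟩
  rw [mul_inv, ← one_div]
  refine mul_le_mul_of_nonneg_left (le_min ?_ ?_) (by positivity)
  · calc (max |s| (b₁ * ε / 2))⁻¹ ≤ (b₁ * ε / 2)⁻¹ := inv_anti₀ (by positivity) (le_max_right _ _)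
      _ = 2 / (b₁ * ε) := inv_div _ _
  · calc (max |s| (b₁ * ε / 2))⁻¹ ≤ |s|⁻¹ := inv_anti₀ (abs_pos.2 hs) (le_max_left _ _)
      _ = 1 / |s| := (one_div _).symm
      _ ≤ _ := le_max_right _ _

theorem propagator_inverse_bound_full
    (m : ℕ) (hm : 1 ≤ m)
    (Γ A : Matrix (Fin m) (Fin m) ℝ)
    (hΓsymm : Γ.IsSymm) (hΓpos : Γ.PosDef) (hAsymm : A.IsSymm) (hApos : A.PosDef)
    (κ₁ : ℝ) (hκ : IsLeast (spectrum ℝ Γ) (κ₁ ^ 2))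
    (K : Matrix (Fin m) (Fin m) ℝ) (hKsymm : K.IsSymm) (hKpos : K.PosDef)
    (hKsq : K * K = Γ)
    (b₁ : ℝ) (hb₁pos : 0 < b₁) (hb₁ : IsLeast (spectrum ℝ (K⁻¹ * A * K⁻¹)) b₁)
    (α : ℝ) (hα : α = Real.sqrt (b₁ * κ₁ ^ 2 / 2))
    (ε : ℝ) (hε : 0 < ε) (hε₁ : ε < α / b₁)
    (s : ℝ) (hs : s ≠ 0) :
    IsUnit (propagator m Γ A ε s) ∧
      l2OpNorm m (propagator m Γ A ε s)⁻¹
        ≤ (1 / κ₁ ^ 2) * min (2 / (b₁ * ε)) (max (1 / α) (1 / |s|)) :=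
  propagator_inverse_bound_full_general m Γ A hΓpos hApos κ₁ hκ K hKpos hKsq b₁ hb₁pos hb₁ α hα ε hε
    hε₁ s hs

end
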